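/- For every nonempty closed convex cone K ⊆ ℝ^d and every δ ∈ (0,1), there exists a finite nonempty set Ȳ contained in the relative interior of K such that cone Ȳ ⊆ K and d_H(cone Ȳ ∩ 𝔹, K ∩ 𝔹) ≤ δ, where cone Ȳ is the conic hull of Ȳ. -/

import Mathlib

/-! Pick a relative interior point `z` of `K` with `‖z‖ ≤ 1`. The map `f ↦ (1 - δ/3) f + (δ/3) z`
sends `K` into its relative interior and moves each point of the unit ball by at most `2δ/3`.
Its image `Ȳ` of a finite `δ/3`-net of `K ∩ 𝔹` therefore works: `cone Ȳ ⊆ K` because `K` is a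
convex cone, and every point of `K ∩ 𝔹` lies within `δ` of a point of `Ȳ ∩ 𝔹`. -/

open Metric Set

noncomputable section

/-- `ℝ^d` as a Euclidean space. -/
abbrev Em (d : ℕ) := EuclideanSpace ℝ (Fin d)

/-- The conic hull: all finite nonnegative combinations of elements of `M`. -/
def coneHull {V : Type*} [AddCommMonoid V] [Module ℝ V] (M : Set V) : Set V :=
  {x | ∃ (k : ℕ) (c : Fin k → ℝ) (v : Fin k → V),
    (∀ i, 0 ≤ c i) ∧ (∀ i, v i ∈ M) ∧ x = ∑ i, c i • v i}

open AffineMap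

section IntrinsicInterior

variable {V : Type*} [NormedAddCommGroup V] [NormedSpace ℝ V] {s : Set V}

theorem mem_intrinsicInterior_iff_forall_dist_lt {x : V} :
    x ∈ intrinsicInterior ℝ s ↔
      x ∈ s ∧ ∃ ε > 0, ∀ u ∈ affineSpan ℝ s, dist u x < ε → u ∈ s := by
  constructor
  · intro h
    obtain ⟨y, hy, rfl⟩ := mem_intrinsicInterior.1 h
    obtain ⟨ε, hε, hball⟩ := Metric.mem_nhds_iff.1 (mem_interior_iff_mem_nhds.1 hy)
    exact ⟨interior_subset (s := Subtype.val ⁻¹' s) hy, ε, hε,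
      fun u hu hdist => hball (show ⟨u, hu⟩ ∈ ball y ε from hdist)⟩
  · rintro ⟨hx, ε, hε, hball⟩
    refine mem_intrinsicInterior.2 ⟨⟨x, subset_affineSpan ℝ s hx⟩, ?_, rfl⟩
    exact mem_interior_iff_mem_nhds.2 <| Metric.mem_nhds_iff.2
      ⟨ε, hε, fun u hu => hball u u.2 hu⟩

theorem Convex.lineMap_mem_intrinsicInterior (hs : Convex ℝ s) {x z : V} (hx : x ∈ s)
    (hz : z ∈ intrinsicInterior ℝ s) {t : ℝ} (ht : t ∈ Ioc 0 1) :
    lineMap x z t ∈ intrinsicInterior ℝ s := by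
  obtain ⟨ht0, ht1⟩ := ht
  obtain ⟨hzs, ε, hε, hball⟩ := mem_intrinsicInterior_iff_forall_dist_lt.1 hz
  refine mem_intrinsicInterior_iff_forall_dist_lt.2
    ⟨hs.lineMap_mem hx hzs ⟨ht0.le, ht1⟩, t * ε, by positivity, fun u hu hdist => ?_⟩
  -- `u` is the image under the homothety of ratio `t` centred at `x` of a point `u'` close to `z`
  set u' := lineMap x u t⁻¹
  have hu' : u' ∈ s := by
    refine hball u' (AffineMap.lineMap_mem _ (subset_affineSpan ℝ s hx) hu) ?_
    have : u' - z = t⁻¹ • (u - lineMap x z t) := by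
      simp only [u', lineMap_apply_module', smul_sub, smul_add, smul_smul,
        inv_mul_cancel₀ ht0.ne', one_smul]
      abel
    rw [dist_eq_norm, this, norm_smul, Real.norm_eq_abs, abs_of_pos (inv_pos.2 ht0),
      ← dist_eq_norm, inv_mul_lt_iff₀ ht0]
    exact hdist
  have : u = lineMap x u' t := by simp [u', mul_inv_cancel₀ ht0.ne']
  exact this ▸ hs.lineMap_mem hx hu' ⟨ht0.le, ht1⟩

end IntrinsicInterior

theorem Convex.exists_mem_intrinsicInterior_norm_le_one {V : Type*} [NormedAddCommGroup V]
    [NormedSpace ℝ V] [FiniteDimensional ℝ V] {s : Set V} (hs : Convex ℝ s) (h0 : (0 : V) ∈ s) :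
    ∃ z ∈ intrinsicInterior ℝ s, ‖z‖ ≤ 1 := by
  obtain ⟨z, hz⟩ := Set.Nonempty.intrinsicInterior hs ⟨0, h0⟩
  have ht : (‖z‖ + 1)⁻¹ ∈ Ioc (0 : ℝ) 1 := ⟨by positivity, inv_le_one_of_one_le₀ (by simp)⟩
  refine ⟨lineMap 0 z (‖z‖ + 1)⁻¹, hs.lineMap_mem_intrinsicInterior h0 hz ht, ?_⟩
  rw [lineMap_apply_module, smul_zero, zero_add, norm_smul, Real.norm_eq_abs,
    abs_of_pos ht.1, inv_mul_le_one₀ (by positivity)]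
  linarith

section ConeHull

variable {V : Type*} [AddCommMonoid V] [Module ℝ V] {K M : Set V}

theorem subset_coneHull : M ⊆ coneHull M :=
  fun y hy => ⟨1, fun _ => 1, fun _ => y, fun _ => zero_le_one, fun _ => hy, by simp⟩

theorem Convex.add_mem_of_smul_mem (hK : Convex ℝ K)
    (hKcone : ∀ x ∈ K, ∀ r : ℝ, 0 ≤ r → r • x ∈ K) {a b : V} (ha : a ∈ K) (hb : b ∈ K) :
    a + b ∈ K := by
  have h := hKcone _ (hK ha hb (by norm_num) (by norm_num) (add_halves 1)) 2 zero_le_two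
  rwa [smul_add, smul_smul, smul_smul, mul_one_div_cancel two_ne_zero, one_smul, one_smul] at h

theorem Convex.coneHull_subset (hK : Convex ℝ K)
    (hKcone : ∀ x ∈ K, ∀ r : ℝ, 0 ≤ r → r • x ∈ K) (h0 : (0 : V) ∈ K) (hMK : M ⊆ K) :
    coneHull M ⊆ K := by
  rintro _ ⟨k, c, v, hc, hv, rfl⟩
  exact Finset.sum_induction _ (· ∈ K) (fun _ _ => hK.add_mem_of_smul_mem hKcone) h0
    fun i _ => hKcone _ (hMK (hv i)) _ (hc i)

end ConeHull

theorem hausdorffDist_le_of_subset_of_forall_exists_dist_le {X : Type*} [PseudoMetricSpace X]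
    {A B : Set X} {r : ℝ} (hAB : A ⊆ B) (hr : 0 ≤ r) (h : ∀ x ∈ B, ∃ y ∈ A, dist x y ≤ r) :
    hausdorffDist A B ≤ r :=
  hausdorffDist_le_of_mem_dist hr (fun x hx => ⟨x, hAB hx, by simpa using hr⟩) h

theorem exists_finite_subset_image_lineMap_dist_le {V : Type*} [NormedAddCommGroup V]
    [NormedSpace ℝ V] [ProperSpace V] {S : Set V} (hS : S ⊆ closedBall 0 1) {z : V}
    (hz : z ∈ closedBall 0 1) {ε : ℝ} (hε : ε ∈ Ioc 0 1) :
    ∃ Y ⊆ (fun f => lineMap f z ε) '' S, Y.Finite ∧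
      ∀ x ∈ S, ∃ y ∈ Y ∩ closedBall 0 1, dist x y ≤ 3 * ε := by
  obtain ⟨F, hFS, hFfin, hFcover⟩ := finite_approx_of_totallyBounded
    ((isCompact_closedBall (0 : V) 1).totallyBounded.subset hS) ε hε.1
  refine ⟨_, image_mono hFS, hFfin.image _, fun x hx => ?_⟩
  obtain ⟨f, hf, hxf⟩ := mem_iUnion₂.1 (hFcover hx)
  have hf1 : f ∈ closedBall (0 : V) 1 := hS (hFS hf)
  refine ⟨lineMap f z ε, ⟨mem_image_of_mem _ hf,
    (convex_closedBall 0 1).lineMap_mem hf1 hz (Ioc_subset_Icc_self hε)⟩, ?_⟩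
  calc dist x (lineMap f z ε)
      ≤ dist x f + ‖ε‖ * dist f z := by rw [← dist_left_lineMap]; exact dist_triangle _ _ _
    _ ≤ ε + ε * (1 + 1) := by
        rw [Real.norm_of_nonneg hε.1.le]
        exact add_le_add (mem_ball.1 hxf).le <| mul_le_mul_of_nonneg_left
          ((dist_triangle_right f z 0).trans (add_le_add hf1 hz)) hε.1.le
    _ = 3 * ε := by ring

theorem exists_finite_inner_conic_approximation_general
    {d : ℕ} (K : Set (Em d)) (hKne : K.Nonempty)
    (hKconv : Convex ℝ K) (hKcone : ∀ x ∈ K, ∀ r : ℝ, 0 ≤ r → r • x ∈ K)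
    (δ : ℝ) (hδ : δ ∈ Set.Ioo (0:ℝ) 1) :
    ∃ Y : Set (Em d), Y.Finite ∧ Y.Nonempty ∧ Y ⊆ intrinsicInterior ℝ K ∧
      coneHull Y ⊆ K ∧
      hausdorffDist (coneHull Y ∩ closedBall 0 1) (K ∩ closedBall 0 1) ≤ δ := by
  obtain ⟨hδ0, hδ1⟩ := hδ
  have h0 : (0 : Em d) ∈ K := by
    obtain ⟨p, hp⟩ := hKne
    simpa using hKcone p hp 0 le_rfl
  obtain ⟨z, hz, hz1⟩ := hKconv.exists_mem_intrinsicInterior_norm_le_one h0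
  have hε : δ / 3 ∈ Ioc (0 : ℝ) 1 := ⟨by positivity, by linarith⟩
  obtain ⟨Y, hYK, hYfin, hYnet⟩ := exists_finite_subset_image_lineMap_dist_le
    inter_subset_right (mem_closedBall_zero_iff.2 hz1) hε
  have hY : Y ⊆ intrinsicInterior ℝ K := by
    intro y hy
    obtain ⟨f, hf, rfl⟩ := hYK hy
    exact hKconv.lineMap_mem_intrinsicInterior hf.1 hz hε
  have hcone : coneHull Y ⊆ K :=
    hKconv.coneHull_subset hKcone h0 (hY.trans intrinsicInterior_subset)
  obtain ⟨y₀, hy₀, -⟩ := hYnet 0 ⟨h0, mem_closedBall_self zero_le_one⟩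
  refine ⟨Y, hYfin, ⟨y₀, hy₀.1⟩, hY, hcone,
    hausdorffDist_le_of_subset_of_forall_exists_dist_le (inter_subset_inter_left _ hcone) hδ0.le
      fun x hx => ?_⟩
  obtain ⟨y, hy, hxy⟩ := hYnet x hx
  exact ⟨y, ⟨subset_coneHull hy.1, hy.2⟩, by linarith⟩

/-- Every nonempty closed convex cone `K ⊆ ℝ^d` admits, for each `δ ∈ (0,1)`, a finite
nonempty set `Ȳ` of relative interior points of `K` with `cone Ȳ ⊆ K` and
`d_H(cone Ȳ ∩ 𝔹, K ∩ 𝔹) ≤ δ`. -/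
theorem exists_finite_inner_conic_approximation
    {d : ℕ} (K : Set (Em d)) (hKne : K.Nonempty) (hKcl : IsClosed K)
    (hKconv : Convex ℝ K) (hKcone : ∀ x ∈ K, ∀ r : ℝ, 0 ≤ r → r • x ∈ K)
    (δ : ℝ) (hδ : δ ∈ Set.Ioo (0:ℝ) 1) :
    ∃ Y : Set (Em d), Y.Finite ∧ Y.Nonempty ∧ Y ⊆ intrinsicInterior ℝ K ∧
      coneHull Y ⊆ K ∧
      hausdorffDist (coneHull Y ∩ closedBall 0 1) (K ∩ closedBall 0 1) ≤ δ :=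
  exists_finite_inner_conic_approximation_general K hKne hKconv hKcone δ hδ
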